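/- arXiv:1812.09002 — 5 statements merged into one kernel-verified Lean document; each statement's English description precedes it below -/
import Mathlib

section
/- Let (T=(V,E);t,σ) be an event-labeled gene tree on 𝔾, let S=(W,F) be a species tree on 𝕊, and let x∈V with t(x)=𝔰 and children x₁,…,x_k (k≥2) in T. If μ is a TreeNet-reconciliation map from (T;t,σ) to S, then μ(x) ⪰_S q for all q ∈ Q²_S(μ(x₁),…,μ(x_k)); that is, μ(x) is the ⪰_S-maximal element of Q²_S(μ(x₁),…,μ(x_k)). -/
namespace Phylo

/-- A directed multigraph: `tail e` and `head e` give the endpoints of an arc `e`.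
    Multi-arcs are allowed since distinct arcs may have the same endpoints. -/
structure MGraph (V : Type) (E : Type) where
  tail : E → V
  head : E → V

namespace MGraph

variable {V E : Type}

/-- `G.Adj u v` iff there is an arc from `u` to `v`. -/
def Adj (G : MGraph V E) (u v : V) : Prop :=
  ∃ e : E, G.tail e = u ∧ G.head e = v

/-- `G.Reach u v` iff there is a directed path (possibly a single vertex) from `u` to `v`. -/
def Reach (G : MGraph V E) (u v : V) : Prop :=
  Relation.ReflTransGen G.Adj u v

/-- `G.vle v u` means `v ⪯ u` (i.e. `v` is a descendant of `u`). -/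
def vle (G : MGraph V E) (v u : V) : Prop := G.Reach u v

/-- `G.vlt v u` means `v ≺ u` (i.e. `v` is strictly below `u`). -/
def vlt (G : MGraph V E) (v u : V) : Prop := G.Reach u v ∧ v ≠ u

/-- indegree of a vertex -/
noncomputable def inDeg (G : MGraph V E) (v : V) : ℕ :=
  Nat.card {e : E // G.head e = v}

/-- outdegree of a vertex -/
noncomputable def outDeg (G : MGraph V E) (v : V) : ℕ :=
  Nat.card {e : E // G.tail e = v}

/-- `G` is a DAG. -/
def Acyclic (G : MGraph V E) : Prop :=
  ∀ v : V, ¬ Relation.TransGen G.Adj v v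

/-- `G` has no multi-arcs. -/
def MultiArcFree (G : MGraph V E) : Prop :=
  ∀ e f : E, G.tail e = G.tail f → G.head e = G.head f → e = f

/-- A point of `V ∪ E`, where an arc is represented by its head
    (used for extending `Q`-sets to arcs). -/
def hpt (G : MGraph V E) : V ⊕ E → V
  | Sum.inl v => v
  | Sum.inr e => G.head e

/-- A point of `V ∪ E`, where an arc is represented by its tail
    (used for extending `lca` to arcs). -/
def tpt (G : MGraph V E) : V ⊕ E → V
  | Sum.inl v => v
  | Sum.inr e => G.tail e

/-- The strict order `≺` on `V ∪ E`:
    `x ≺ y` for vertices means `x ⪯ y` and `x ≠ y`;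
    a vertex `x ≺` an arc `e = (u,v)` iff `x ⪯ v`;
    an arc `e = (u,v) ≺` a vertex `x` iff `u ⪯ x`;
    for arcs `e = (u,v)` and `f = (a,b)`: `e ≺ f` iff `v ≺ u ⪯ b ≺ a`. -/
def slt (G : MGraph V E) : V ⊕ E → V ⊕ E → Prop
  | Sum.inl x, Sum.inl y => G.vlt x y
  | Sum.inl x, Sum.inr e => G.vle x (G.head e)
  | Sum.inr e, Sum.inl x => G.vle (G.tail e) x
  | Sum.inr e, Sum.inr f =>
      G.vlt (G.head e) (G.tail e) ∧ G.vle (G.tail e) (G.head f) ∧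
        G.vlt (G.head f) (G.tail f)

/-- The (non-strict) order `⪯` on `V ∪ E`. -/
def sle (G : MGraph V E) (a b : V ⊕ E) : Prop := a = b ∨ G.slt a b

/-- `Q_N(x,y)`: the set of vertices `z` admitting directed paths from `z` to `x`
    and from `z` to `y` which are separated by `z`, i.e. start with different
    children of `z`. -/
def QSet (G : MGraph V E) (x y : V) : Set V :=
  {z | ∃ c₁ c₂ : V, c₁ ≠ c₂ ∧ G.Adj z c₁ ∧ G.Adj z c₂ ∧ G.Reach c₁ x ∧ G.Reach c₂ y}

/-- `l` is the least common ancestor of the set `A`: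
    a `⪯`-minimal common ancestor of all of `A`. -/
def IsLca (G : MGraph V E) (A : Set V) (l : V) : Prop :=
  (∀ a ∈ A, G.Reach l a) ∧ ∀ l' : V, (∀ a ∈ A, G.Reach l' a) → G.Reach l' l

/-- A directed path, given as its (nonempty, repetition-free) list of vertices. -/
def IsDiPath (G : MGraph V E) (p : List V) : Prop :=
  p ≠ [] ∧ p.Chain' G.Adj ∧ p.Nodup

end MGraph

/-- Event labels for inner vertices of gene trees: speciation or duplication. -/
inductive Event : Type
  | spec : Event
  | dupl : Event
  deriving DecidableEq

variable {V E W F D U S : Type}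

/-- `(G, lv, ρ)` is a (rooted phylogenetic) network with leaf set `lv` and root `ρ`:
    (N1) the root has indegree 0 and outdegree 1 and its unique child has
    indegree 1 and outdegree at least 2;
    (N2) the leaves are exactly the vertices of outdegree 0 and indegree 1;
    (N3) every other non-leaf vertex is a tree vertex (indegree 1, outdegree > 1)
    or a hybrid vertex (indegree > 1, outdegree 1);
    moreover the leaf set has at least two elements and everything is finite. -/
structure IsNetwork (G : MGraph V E) (lv : Set V) (ρ : V) : Prop where
  finV : Finite V
  finE : Finite E
  acyclic : G.Acyclic
  root_in : G.inDeg ρ = 0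
  root_out : G.outDeg ρ = 1
  root_child : ∀ c : V, G.Adj ρ c → G.inDeg c = 1 ∧ 2 ≤ G.outDeg c
  leaf_iff : ∀ v : V, v ∈ lv ↔ (G.outDeg v = 0 ∧ G.inDeg v = 1)
  inner_deg : ∀ v : V, v ∉ lv → v ≠ ρ →
      (G.inDeg v = 1 ∧ 2 ≤ G.outDeg v) ∨ (2 ≤ G.inDeg v ∧ G.outDeg v = 1)
  two_leaves : ∃ a b : V, a ∈ lv ∧ b ∈ lv ∧ a ≠ b

/-- no hybrid vertices -/
def NoHybrid (G : MGraph V E) : Prop := ∀ v : V, G.inDeg v ≤ 1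

/-- A (rooted) phylogenetic tree: a multi-arc free network without hybrid vertices. -/
def IsPhyloTree (G : MGraph V E) (lv : Set V) (ρ : V) : Prop :=
  IsNetwork G lv ρ ∧ G.MultiArcFree ∧ NoHybrid G

/-- A network (or tree) "on 𝕊": its leaves are in bijection with the species set `S`
    via the labeling `sp`. -/
structure IsLeafLabeling (G : MGraph V E) (lv : Set V) (sp : S → V) : Prop where
  inj : Function.Injective sp
  mem : ∀ s : S, sp s ∈ lv
  surj : ∀ v ∈ lv, ∃ s : S, sp s = v

/-- `(G, lv, ρ, σ)` is the underlying structure of an event-labeled gene tree on the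
    gene set `lv`: a reduced tree (root of indegree 0 and outdegree ≥ 2, all other
    inner vertices of indegree 1 and outdegree ≥ 2) together with a surjective
    gene-species map `σ` whose image has more than one element. -/
structure IsGeneTree (G : MGraph V E) (lv : Set V) (ρ : V) (σ : V → S) : Prop where
  finV : Finite V
  finE : Finite E
  acyclic : G.Acyclic
  multiarc_free : G.MultiArcFree
  root_in : G.inDeg ρ = 0
  root_out : 2 ≤ G.outDeg ρ
  leaf_iff : ∀ v : V, v ∈ lv ↔ (G.outDeg v = 0 ∧ G.inDeg v = 1)
  inner_deg : ∀ v : V, v ∉ lv → v ≠ ρ → G.inDeg v = 1 ∧ 2 ≤ G.outDeg v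
  sigma_surj : ∀ s : S, ∃ g ∈ lv, σ g = s
  sigma_nontriv : ∃ g g' : V, g ∈ lv ∧ g' ∈ lv ∧ σ g ≠ σ g'

/-- `L_T(x)`: the set of leaves below or equal to `x`. -/
def leavesBelow (G : MGraph V E) (lv : Set V) (x : V) : Set V :=
  {g | g ∈ lv ∧ G.Reach x g}

/-- A TreeNet-reconciliation map `μ` from the event-labeled gene tree `(T;t,σ)`
    to the network `N` (with species labeling `sp`):
    (R1) leaves are mapped to the species containing them;
    (R2.i) a speciation vertex is mapped to a vertex of `N` separating the images
    of two of its children (i.e. `μ x ∈ Q²`);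
    (R2.ii) a duplication vertex is mapped to an arc of `N`;
    (R3) ancestor relations are preserved (strictly, unless both events are
    duplications). -/
structure IsTreeNetRecon (T : MGraph V E) (lvT : Set V) (t : V → Event) (σ : V → S)
    (N : MGraph W F) (sp : S → W) (μ : V → W ⊕ F) : Prop where
  R1 : ∀ x ∈ lvT, μ x = Sum.inl (sp (σ x))
  R2i : ∀ x : V, x ∉ lvT → t x = Event.spec →
      ∃ w : W, μ x = Sum.inl w ∧ ∃ c₁ c₂ : V, T.Adj x c₁ ∧ T.Adj x c₂ ∧
        w ∈ N.QSet (N.hpt (μ c₁)) (N.hpt (μ c₂))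
  R2ii : ∀ x : V, x ∉ lvT → t x = Event.dupl → ∃ e : F, μ x = Sum.inr e
  R3d : ∀ x y : V, T.vlt x y → x ∉ lvT → y ∉ lvT →
      t x = Event.dupl → t y = Event.dupl → N.sle (μ x) (μ y)
  R3s : ∀ x y : V, T.vlt x y →
      ¬ (x ∉ lvT ∧ y ∉ lvT ∧ t x = Event.dupl ∧ t y = Event.dupl) →
      N.slt (μ x) (μ y)

/-!
Without hybrid vertices every vertex has at most one parent, so two ancestors of a
common vertex are comparable, and two distinct children of a vertex have no common
descendant. By (R3), `μ(x) = w` lies above the images of both children of `x`, and so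
does any `q ∈ Q_S(μ(x₁), μ(x₂))`. Hence `q` and `w` are comparable. If `q` were strictly
above `w`, the child `c` of `q` on the path to `w` would reach both images, while one of
the two distinct children of `q` witnessing `q ∈ Q` differs from `c` and reaches the
same image as `c`: impossible.
-/

namespace MGraph

variable {G : MGraph W F}

lemma vlt_of_adj (hac : G.Acyclic) {u v : W} (h : G.Adj u v) : G.vlt v u :=
  ⟨.single h, fun hvu => hac u (.single (hvu ▸ h))⟩

lemma sle_inl_of_reach {q w : W} (h : G.Reach w q) : G.sle (Sum.inl q) (Sum.inl w) := by
  by_cases hqw : q = w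
  · exact Or.inl (hqw ▸ rfl)
  · exact Or.inr ⟨h, hqw⟩

lemma reach_hpt_of_slt {p : W ⊕ F} {w : W} (h : G.slt p (Sum.inl w)) :
    G.Reach w (G.hpt p) := by
  cases p with
  | inl v => exact h.1
  | inr e => exact h.tail ⟨e, rfl, rfl⟩

end MGraph

namespace NoHybrid

variable [Finite F] {G : MGraph W F}

lemma eq_of_adj (hnh : NoHybrid G) {u u' c : W} (h : G.Adj u c) (h' : G.Adj u' c) :
    u = u' := by
  obtain ⟨e, rfl, he⟩ := h
  obtain ⟨f, rfl, hf⟩ := h'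
  have : Subsingleton {e : F // G.head e = c} :=
    Finite.card_le_one_iff_subsingleton.mp (hnh c)
  exact congrArg (G.tail ∘ Subtype.val)
    (Subsingleton.elim (⟨e, he⟩ : {e // G.head e = c}) ⟨f, hf⟩)

lemma reach_total (hnh : NoHybrid G) {u u' v : W} (h : G.Reach u v) (h' : G.Reach u' v) :
    G.Reach u u' ∨ G.Reach u' u := by
  induction h using Relation.ReflTransGen.head_induction_on generalizing u' with
  | refl => exact Or.inr h'
  | head hadj _ ih =>
    rcases ih h' with hcu' | hu'c
    · exact Or.inl (hcu'.head hadj)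
    · rcases hu'c.cases_tail with rfl | ⟨p, hp, hpc⟩
      · exact Or.inl (.single hadj)
      · exact Or.inr (eq_of_adj hnh hpc hadj ▸ hp)

lemma not_reach_of_adj_of_adj (hac : G.Acyclic) (hnh : NoHybrid G) {q c d v : W}
    (hc : G.Adj q c) (hd : G.Adj q d) (hne : c ≠ d) (hcv : G.Reach c v) :
    ¬ G.Reach d v := by
  have below_sibling : ∀ {c d : W}, G.Adj q c → G.Adj q d → c ≠ d → ¬ G.Reach c d := by
    intro c d hc hd hne hcd
    rcases hcd.cases_tail with rfl | ⟨p, hp, hpd⟩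
    · exact hne rfl
    · exact hac q (.head' hc (eq_of_adj hnh hpd hd ▸ hp))
  intro hdv
  rcases reach_total hnh hcv hdv with hcd | hdc
  · exact below_sibling hc hd hne hcd
  · exact below_sibling hd hc hne.symm hdc

lemma reach_of_mem_QSet (hac : G.Acyclic) (hnh : NoHybrid G) {w a b q : W}
    (hwa : G.Reach w a) (hwb : G.Reach w b) (hq : q ∈ G.QSet a b) : G.Reach w q := by
  obtain ⟨d₁, d₂, hne, hd₁, hd₂, hd₁a, hd₂b⟩ := hq
  rcases reach_total hnh (hd₁a.head hd₁) hwa with hqw | hwq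
  · rcases hqw.cases_head with rfl | ⟨c, hqc, hcw⟩
    · exact .refl
    · exfalso
      by_cases hcd : c = d₁
      · subst hcd
        exact not_reach_of_adj_of_adj hac hnh hqc hd₂ hne (hcw.trans hwb) hd₂b
      · exact not_reach_of_adj_of_adj hac hnh hqc hd₁ hcd (hcw.trans hwa) hd₁a
  · exact hwq

end NoHybrid

namespace IsTreeNetRecon

open MGraph

variable {T : MGraph V E} {lvT : Set V} {t : V → Event} {σ : V → S}
  {N : MGraph W F} {sp : S → W} {μ : V → W ⊕ F}

lemma reach_hpt_of_adj (hμ : IsTreeNetRecon T lvT t σ N sp μ) (hac : T.Acyclic) {x c : V}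
    {w : W} (hxs : t x = Event.spec) (hw : μ x = Sum.inl w) (hc : T.Adj x c) :
    N.Reach w (N.hpt (μ c)) := by
  have hslt := hμ.R3s c x (vlt_of_adj hac hc) fun h => by simp [hxs] at h
  exact reach_hpt_of_slt (hw ▸ hslt)

end IsTreeNetRecon

theorem recon_speciation_max_in_Q2_general {V E W F S : Type}
    (T : MGraph V E) (lvT : Set V) (ρT : V) (t : V → Event) (σ : V → S)
    (hT : IsGeneTree T lvT ρT σ)
    (Sg : MGraph W F) (lvS : Set W) (ρS : W) (sp : S → W)
    (hS : IsPhyloTree Sg lvS ρS)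
    (μ : V → W ⊕ F) (hμ : IsTreeNetRecon T lvT t σ Sg sp μ)
    (x : V) (hx : x ∉ lvT) (hxs : t x = Event.spec) :
    ∀ (q : W) (c₁ c₂ : V), T.Adj x c₁ → T.Adj x c₂ →
      q ∈ Sg.QSet (Sg.hpt (μ c₁)) (Sg.hpt (μ c₂)) →
      Sg.sle (Sum.inl q) (μ x) := by
  intro q c₁ c₂ hc₁ hc₂ hq
  obtain ⟨hSN, -, hnh⟩ := hS
  have := hSN.finE
  obtain ⟨w, hw, -⟩ := hμ.R2i x hx hxs
  rw [hw]
  exact MGraph.sle_inl_of_reach <| hnh.reach_of_mem_QSet hSN.acyclic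
    (hμ.reach_hpt_of_adj hT.acyclic hxs hw hc₁) (hμ.reach_hpt_of_adj hT.acyclic hxs hw hc₂) hq

/-- If `μ` is a TreeNet-reconciliation map from the event-labeled
    gene tree `(T;t,σ)` to a species tree `S`, and `x` is a speciation vertex with
    children `x₁,…,x_k` (`k ≥ 2`, automatic for inner vertices), then
    `μ(x) ⪰_S q` for every `q ∈ Q²_S(μ(x₁),…,μ(x_k))`, i.e. `μ(x)` is the
    `⪰_S`-maximal element of this set. -/
theorem recon_speciation_max_in_Q2 {V E W F S : Type}
    (T : MGraph V E) (lvT : Set V) (ρT : V) (t : V → Event) (σ : V → S)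
    (hT : IsGeneTree T lvT ρT σ)
    (Sg : MGraph W F) (lvS : Set W) (ρS : W) (sp : S → W)
    (hS : IsPhyloTree Sg lvS ρS) (hsp : IsLeafLabeling Sg lvS sp)
    (μ : V → W ⊕ F) (hμ : IsTreeNetRecon T lvT t σ Sg sp μ)
    (x : V) (hx : x ∉ lvT) (hxs : t x = Event.spec) :
    ∀ (q : W) (c₁ c₂ : V), T.Adj x c₁ → T.Adj x c₂ →
      q ∈ Sg.QSet (Sg.hpt (μ c₁)) (Sg.hpt (μ c₂)) →
      Sg.sle (Sum.inl q) (μ x) :=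
  recon_speciation_max_in_Q2_general T lvT ρT t σ hT Sg lvS ρS sp hS μ hμ x hx hxs

end Phylo
end

section
/- Let (T=(V,E);t,σ) be an event-labeled gene tree such that there exists a relaxed tree reconciliation map μ from (T;t,σ) to some species tree S, and let x∈V with t(x)=𝔰. Then there exist two distinct children x_i and x_j of x in T such that (i) μ(x)=lca_S(μ(x_i),μ(x_j)) and (ii) μ(x_i) and μ(x_j) are incomparable in S. Furthermore, (iii) for every child x_i of x in T there is a child x_j of x in T such that σ(L_T(x_i)) ∩ σ(L_T(x_j)) = ∅. -/
/-!
Let `w = μ(x) = lca_S(σ(L_T(x)))`. By (R3) every child `c` of `x` is mapped strictly below `w`,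
so `μ(c)` lies below a child `u` of `w` in `S`; since `w` is the lca, not all species of
`L_T(x)` lie below `u`, and a species outside `u` is reached through another child `c'` of `x`,
which lies below a child `u' ≠ u` of `w`. In a tree, distinct children of `w` have no common
descendant: this gives (iii) for `c, c'`, the incomparability (ii) of `μ(c), μ(c')`, and that
no proper descendant of `w` lies above both, i.e. (i).
-/

namespace Phylo

variable {V E W F D U S : Type}

/-- A relaxed tree reconciliation map from `(T;t,σ)` to the species tree `S`:
    like a tree reconciliation map but (R2.iii) is not required.
    (R2.i*) requires a speciation vertex to be mapped to
    `lca_S(σ(L_T(x)))`. -/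
structure IsRelaxedRecon (T : MGraph V E) (lvT : Set V) (t : V → Event) (σ : V → S)
    (N : MGraph W F) (sp : S → W) (μ : V → W ⊕ F) : Prop where
  R1 : ∀ x ∈ lvT, μ x = Sum.inl (sp (σ x))
  R2istar : ∀ x : V, x ∉ lvT → t x = Event.spec →
      ∃ w : W, μ x = Sum.inl w ∧ N.IsLca (sp '' (σ '' leavesBelow T lvT x)) w
  R2ii : ∀ x : V, x ∉ lvT → t x = Event.dupl → ∃ e : F, μ x = Sum.inr e
  R3d : ∀ x y : V, T.vlt x y → x ∉ lvT → y ∉ lvT →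
      t x = Event.dupl → t y = Event.dupl → N.sle (μ x) (μ y)
  R3s : ∀ x y : V, T.vlt x y →
      ¬ (x ∉ lvT ∧ y ∉ lvT ∧ t x = Event.dupl ∧ t y = Event.dupl) →
      N.slt (μ x) (μ y)

namespace MGraph

variable {G : MGraph V E}

theorem reach_tpt_hpt (p : V ⊕ E) : G.Reach (G.tpt p) (G.hpt p) := by
  cases p with
  | inl v => exact .refl
  | inr e => exact .single ⟨e, rfl, rfl⟩

theorem reach_hpt_of_sle {p q : V ⊕ E} (h : G.sle p q) : G.Reach (G.hpt q) (G.hpt p) := by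
  rcases h with rfl | h
  · exact .refl
  · cases p <;> cases q
    exacts [h.1, h, .tail h ⟨_, rfl, rfl⟩, .tail h.2.1 ⟨_, rfl, rfl⟩]

theorem reach_tpt_of_slt_inl {p : V ⊕ E} {w : V} (h : G.slt p (.inl w)) :
    G.Reach w (G.tpt p) := by
  cases p
  exacts [h.1, h]

theorem exists_adj_reach_hpt_of_slt_inl {p : V ⊕ E} {w : V} (h : G.slt p (.inl w)) :
    ∃ u, G.Adj w u ∧ G.Reach u (G.hpt p) := by
  cases p with
  | inl v =>
    obtain ⟨hwv, hvw⟩ := h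
    exact (hwv.cases_head).resolve_left (Ne.symm hvw)
  | inr e =>
    have hadj : G.Adj (G.tail e) (G.head e) := ⟨e, rfl, rfl⟩
    rcases Relation.ReflTransGen.cases_head (show G.Reach w (G.tail e) from h)
      with rfl | ⟨u, hwu, hu⟩
    · exact ⟨G.head e, hadj, .refl⟩
    · exact ⟨u, hwu, hu.tail hadj⟩

end MGraph

namespace NoHybrid

variable {G : MGraph V E} [Finite E]

theorem eq_of_adj_of_adj (hnh : NoHybrid G) {p q v : V} (hp : G.Adj p v) (hq : G.Adj q v) :
    p = q := by
  obtain ⟨e, rfl, he⟩ := hp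
  obtain ⟨f, rfl, hf⟩ := hq
  have : Subsingleton {e : E // G.head e = v} := Finite.card_le_one_iff_subsingleton.1 (hnh v)
  exact congrArg (fun a => G.tail a.1)
    (Subsingleton.elim (α := {e : E // G.head e = v}) ⟨e, he⟩ ⟨f, hf⟩)

theorem reach_total_s2 (hnh : NoHybrid G) {a b z : V} (ha : G.Reach a z) (hb : G.Reach b z) :
    G.Reach a b ∨ G.Reach b a := by
  induction ha generalizing b with
  | refl => exact .inr hb
  | tail _ hadj ih =>
    rcases hb.cases_tail with rfl | ⟨c, hbc, hcz⟩
    · exact .inl (.tail ‹_› hadj)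
    · exact ih (hnh.eq_of_adj_of_adj hcz hadj ▸ hbc)

theorem eq_of_adj_of_reach (hnh : NoHybrid G) (hG : G.Acyclic) {w u₁ u₂ z : V}
    (h₁ : G.Adj w u₁) (h₂ : G.Adj w u₂) (r₁ : G.Reach u₁ z) (r₂ : G.Reach u₂ z) :
    u₁ = u₂ := by
  have sibling_reach : ∀ {a b : V}, G.Adj w a → G.Adj w b → G.Reach a b → a = b := by
    intro a b hwa hwb hab
    rcases hab.cases_tail with rfl | ⟨p, hap, hpb⟩
    · rfl
    · exact (hG w (.head' hwa (hnh.eq_of_adj_of_adj hpb hwb ▸ hap))).elim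
  rcases hnh.reach_total_s2 r₁ r₂ with h | h
  exacts [sibling_reach h₁ h₂ h, (sibling_reach h₂ h₁ h).symm]

theorem reach_of_reach_of_reach (hnh : NoHybrid G) (hG : G.Acyclic) {w u₁ u₂ z₁ z₂ l : V}
    (h₁ : G.Adj w u₁) (h₂ : G.Adj w u₂) (hu : u₁ ≠ u₂) (r₁ : G.Reach u₁ z₁)
    (r₂ : G.Reach u₂ z₂) (hl₁ : G.Reach l z₁) (hl₂ : G.Reach l z₂) : G.Reach l w := by
  rcases hnh.reach_total_s2 hl₁ (.head h₁ r₁) with h | h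
  · exact h
  rcases h.cases_head with rfl | ⟨u, hwu, hul⟩
  · exact .refl
  · exact (hu ((hnh.eq_of_adj_of_reach hG hwu h₁ (hul.trans hl₁) r₁).symm.trans
      (hnh.eq_of_adj_of_reach hG hwu h₂ (hul.trans hl₂) r₂))).elim

end NoHybrid

theorem exists_adj_mem_leavesBelow {T : MGraph V E} {lv : Set V} {x g : V} (hx : x ∉ lv)
    (hg : g ∈ leavesBelow T lv x) : ∃ c, T.Adj x c ∧ g ∈ leavesBelow T lv c := by
  rcases hg.2.cases_head with rfl | ⟨c, hxc, hcg⟩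
  · exact absurd hg.1 hx
  · exact ⟨c, hxc, hg.1, hcg⟩

theorem IsGeneTree.exists_adj {T : MGraph V E} {lv : Set V} {ρ : V} {σ : V → S}
    (hT : IsGeneTree T lv ρ σ) {x : V} (hx : x ∉ lv) : ∃ c, T.Adj x c := by
  have hdeg : 2 ≤ T.outDeg x := by
    by_cases hxρ : x = ρ
    · exact hxρ ▸ hT.root_out
    · exact (hT.inner_deg x hx hxρ).2
  have hpos : 0 < Nat.card {e : E // T.tail e = x} := by
    unfold MGraph.outDeg at hdeg
    omega
  obtain ⟨⟨e, he⟩⟩ := (Nat.card_pos_iff.1 hpos).1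
  exact ⟨T.head e, e, he, rfl⟩

namespace IsRelaxedRecon

variable {T : MGraph V E} {lvT : Set V} {t : V → Event} {σ : V → S}
  {Sg : MGraph W F} {sp : S → W} {μ : V → W ⊕ F}

theorem slt_of_adj_of_spec (hμ : IsRelaxedRecon T lvT t σ Sg sp μ) (hT : T.Acyclic) {x c : V}
    (hxs : t x = .spec) (hc : T.Adj x c) : Sg.slt (μ c) (μ x) := by
  refine hμ.R3s c x ⟨.single hc, ?_⟩ ?_
  · rintro rfl
    exact hT c (.single hc)
  · rintro ⟨-, -, -, hxd⟩
    exact Event.noConfusion (hxs.symm.trans hxd)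

theorem reach_hpt_of_mem_leavesBelow (hμ : IsRelaxedRecon T lvT t σ Sg sp μ) {y g : V}
    (hg : g ∈ leavesBelow T lvT y) : Sg.Reach (Sg.hpt (μ y)) (sp (σ g)) := by
  have hle : Sg.sle (μ g) (μ y) := by
    by_cases hgy : g = y
    · exact .inl (congrArg μ hgy)
    · exact .inr (hμ.R3s g y ⟨hg.2, hgy⟩ fun h => h.1 hg.1)
  simpa only [hμ.R1 g hg.1, MGraph.hpt] using MGraph.reach_hpt_of_sle hle

theorem exists_adj_separated (hμ : IsRelaxedRecon T lvT t σ Sg sp μ) (hT : T.Acyclic)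
    (hS : Sg.Acyclic) {x : V} (hx : x ∉ lvT) (hxs : t x = .spec) {w : W}
    (hμx : μ x = .inl w) (hw : Sg.IsLca (sp '' (σ '' leavesBelow T lvT x)) w) {c : V}
    (hc : T.Adj x c) :
    ∃ c', T.Adj x c' ∧ ∃ u u', Sg.Adj w u ∧ Sg.Adj w u' ∧ u ≠ u' ∧
      Sg.Reach u (Sg.hpt (μ c)) ∧ Sg.Reach u' (Sg.hpt (μ c')) := by
  have below : ∀ c, T.Adj x c → ∃ u, Sg.Adj w u ∧ Sg.Reach u (Sg.hpt (μ c)) := fun c hc =>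
    MGraph.exists_adj_reach_hpt_of_slt_inl (hμx ▸ hμ.slt_of_adj_of_spec hT hxs hc)
  obtain ⟨u, hwu, hu⟩ := below c hc
  obtain ⟨_, ⟨_, ⟨g, hg, rfl⟩, rfl⟩, hug⟩ :
      ∃ a ∈ sp '' (σ '' leavesBelow T lvT x), ¬ Sg.Reach u a := by
    by_contra! h
    exact hS w (.head' hwu (hw.2 u h))
  obtain ⟨c', hc', hgc'⟩ := exists_adj_mem_leavesBelow hx hg
  obtain ⟨u', hwu', hu'⟩ := below c' hc'
  refine ⟨c', hc', u, u', hwu, hwu', ?_, hu, hu'⟩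
  rintro rfl
  exact hug (hu'.trans (hμ.reach_hpt_of_mem_leavesBelow hgc'))

end IsRelaxedRecon

theorem relaxed_recon_speciation_children_general {V E W F S : Type}
    (T : MGraph V E) (lvT : Set V) (ρT : V) (t : V → Event) (σ : V → S)
    (hT : IsGeneTree T lvT ρT σ)
    (Sg : MGraph W F) (lvS : Set W) (ρS : W) (sp : S → W)
    (hS : IsPhyloTree Sg lvS ρS)
    (μ : V → W ⊕ F) (hμ : IsRelaxedRecon T lvT t σ Sg sp μ)
    (x : V) (hx : x ∉ lvT) (hxs : t x = Event.spec) :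
    (∃ xi xj : V, T.Adj x xi ∧ T.Adj x xj ∧ xi ≠ xj ∧
        (∃ w : W, μ x = Sum.inl w ∧ Sg.IsLca {Sg.tpt (μ xi), Sg.tpt (μ xj)} w) ∧
        ¬ Sg.sle (μ xi) (μ xj) ∧ ¬ Sg.sle (μ xj) (μ xi)) ∧
    (∀ xi : V, T.Adj x xi → ∃ xj : V, T.Adj x xj ∧
        (σ '' leavesBelow T lvT xi) ∩ (σ '' leavesBelow T lvT xj) = ∅) := by
  obtain ⟨hSnet, -, hnh⟩ := hS
  have := hSnet.finE
  obtain ⟨w, hμx, hw⟩ := hμ.R2istar x hx hxs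
  have separated := fun c (hc : T.Adj x c) =>
    hμ.exists_adj_separated hT.acyclic hSnet.acyclic hx hxs hμx hw hc
  have siblings : ∀ {u u' z}, Sg.Adj w u → Sg.Adj w u' → Sg.Reach u z → Sg.Reach u' z →
      u = u' := hnh.eq_of_adj_of_reach hSnet.acyclic
  have tpt_below := fun c (hc : T.Adj x c) =>
    MGraph.reach_tpt_of_slt_inl (hμx ▸ hμ.slt_of_adj_of_spec hT.acyclic hxs hc)
  obtain ⟨c₁, hc₁⟩ := hT.exists_adj hx
  obtain ⟨c₂, hc₂, u₁, u₂, hwu₁, hwu₂, hu, hu₁, hu₂⟩ := separated c₁ hc₁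
  refine ⟨⟨c₁, c₂, hc₁, hc₂, ?_, ⟨w, hμx, ?_, fun l hl => ?_⟩, fun h => ?_,
    fun h => ?_⟩, fun c hc => ?_⟩
  · rintro rfl
    exact hu (siblings hwu₁ hwu₂ hu₁ hu₂)
  · rintro _ (rfl | rfl)
    exacts [tpt_below c₁ hc₁, tpt_below c₂ hc₂]
  · exact hnh.reach_of_reach_of_reach hSnet.acyclic hwu₁ hwu₂ hu hu₁ hu₂
      ((hl _ (.inl rfl)).trans (MGraph.reach_tpt_hpt _))
      ((hl _ (.inr rfl)).trans (MGraph.reach_tpt_hpt _))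
  · exact hu (siblings hwu₁ hwu₂ hu₁ (hu₂.trans (MGraph.reach_hpt_of_sle h)))
  · exact hu (siblings hwu₁ hwu₂ (hu₁.trans (MGraph.reach_hpt_of_sle h)) hu₂)
  · obtain ⟨c', hc', u, u', hwu, hwu', hu, hcu, hcu'⟩ := separated c hc
    refine ⟨c', hc', Set.eq_empty_iff_forall_notMem.2 ?_⟩
    rintro _ ⟨⟨g, hg, rfl⟩, g', hg', hσ⟩
    exact hu (siblings hwu hwu' (hcu.trans (hμ.reach_hpt_of_mem_leavesBelow hg))
      (hσ ▸ hcu'.trans (hμ.reach_hpt_of_mem_leavesBelow hg')))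

/-- If `μ` is a relaxed tree reconciliation map from `(T;t,σ)` to a
    species tree `S` and `x` is a speciation vertex, then there are two distinct
    children `x_i, x_j` of `x` with (i) `μ(x) = lca_S(μ(x_i), μ(x_j))` and
    (ii) `μ(x_i)` and `μ(x_j)` incomparable in `S`; furthermore (iii) every child
    `x_i` admits a child `x_j` with `σ(L_T(x_i)) ∩ σ(L_T(x_j)) = ∅`. -/
theorem relaxed_recon_speciation_children {V E W F S : Type}
    (T : MGraph V E) (lvT : Set V) (ρT : V) (t : V → Event) (σ : V → S)
    (hT : IsGeneTree T lvT ρT σ)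
    (Sg : MGraph W F) (lvS : Set W) (ρS : W) (sp : S → W)
    (hS : IsPhyloTree Sg lvS ρS) (hsp : IsLeafLabeling Sg lvS sp)
    (μ : V → W ⊕ F) (hμ : IsRelaxedRecon T lvT t σ Sg sp μ)
    (x : V) (hx : x ∉ lvT) (hxs : t x = Event.spec) :
    (∃ xi xj : V, T.Adj x xi ∧ T.Adj x xj ∧ xi ≠ xj ∧
        (∃ w : W, μ x = Sum.inl w ∧ Sg.IsLca {Sg.tpt (μ xi), Sg.tpt (μ xj)} w) ∧
        ¬ Sg.sle (μ xi) (μ xj) ∧ ¬ Sg.sle (μ xj) (μ xi)) ∧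
    (∀ xi : V, T.Adj x xi → ∃ xj : V, T.Adj x xj ∧
        (σ '' leavesBelow T lvT xi) ∩ (σ '' leavesBelow T lvT xj) = ∅) :=
  relaxed_recon_speciation_children_general T lvT ρT t σ hT Sg lvS ρS sp hS μ hμ x hx hxs

end Phylo
end

section
/- Let (T=(V,E);t,σ) be an event-labeled gene tree, let S=(W,F) be a species tree, and let μ: V → W∪F be a map. Then μ is a tree reconciliation map from (T;t,σ) to S if and only if μ is a TreeNet-reconciliation map from (T;t,σ) to S that additionally satisfies Property (R2.iii). -/
namespace Phylo

variable {V E W F D U S : Type}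

/-- Property (R2.iii): the images of any two distinct children of a speciation
    vertex are incomparable. -/
def SatR2iii (T : MGraph V E) (lvT : Set V) (t : V → Event)
    (Sg : MGraph W F) (μ : V → W ⊕ F) : Prop :=
  ∀ x : V, x ∉ lvT → t x = Event.spec →
    ∀ y₁ y₂ : V, T.Adj x y₁ → T.Adj x y₂ → y₁ ≠ y₂ →
      ¬ Sg.sle (μ y₁) (μ y₂) ∧ ¬ Sg.sle (μ y₂) (μ y₁)

open Relation

namespace MGraph

variable {G : MGraph W F}

lemma Reach.exists_adj_of_ne {w v : W} (h : G.Reach w v) (hne : v ≠ w) :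
    ∃ z, G.Adj w z ∧ G.Reach z v := by
  rcases h.cases_head with rfl | hz
  · exact absurd rfl hne
  · exact hz

lemma Acyclic.not_reach_of_adj (hac : G.Acyclic) {u v : W} (h : G.Adj u v) :
    ¬ G.Reach v u :=
  fun hr => hac u (TransGen.head' h hr)

lemma Acyclic.ne_of_adj (hac : G.Acyclic) {u v : W} (h : G.Adj u v) : v ≠ u := by
  rintro rfl
  exact hac.not_reach_of_adj h ReflTransGen.refl

lemma eq_of_adj_of_adj [Finite F] (hnh : NoHybrid G) {u u' v : W}
    (h : G.Adj u v) (h' : G.Adj u' v) : u = u' := by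
  obtain ⟨e, rfl, rfl⟩ := h
  obtain ⟨f, rfl, hf⟩ := h'
  have : Subsingleton {e' : F // G.head e' = G.head e} :=
    Finite.card_le_one_iff_subsingleton.mp (hnh _)
  exact congrArg (G.tail ∘ Subtype.val)
    (Subsingleton.elim (⟨e, rfl⟩ : {e' : F // G.head e' = G.head e}) ⟨f, hf⟩)

lemma reach_total_of_reach [Finite F] (hnh : NoHybrid G) {u v a : W}
    (hu : G.Reach u a) (hv : G.Reach v a) : G.Reach u v ∨ G.Reach v u := by
  induction hu using ReflTransGen.head_induction_on with
  | refl => exact Or.inr hv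
  | head hadj _ ih =>
    rcases ih with h | h
    · exact Or.inl (h.head hadj)
    · rcases h.cases_tail with rfl | ⟨d, hvd, hdc⟩
      · exact Or.inl (ReflTransGen.single hadj)
      · exact Or.inr (eq_of_adj_of_adj hnh hdc hadj ▸ hvd)

lemma eq_of_adj_of_reach [Finite F] (hac : G.Acyclic) (hnh : NoHybrid G) {w z z' : W}
    (hz : G.Adj w z) (hz' : G.Adj w z') (hr : G.Reach z z') : z = z' := by
  rcases hr.cases_tail with rfl | ⟨d, hzd, hdz'⟩
  · rfl
  · rw [eq_of_adj_of_adj hnh hdz' hz'] at hzd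
    exact absurd hzd (hac.not_reach_of_adj hz)

lemma eq_of_adj_of_reach_of_reach [Finite F] (hac : G.Acyclic) (hnh : NoHybrid G)
    {w z z' p : W} (hz : G.Adj w z) (hz' : G.Adj w z') (hp : G.Reach z p)
    (hp' : G.Reach z' p) : z = z' := by
  rcases reach_total_of_reach hnh hp hp' with h | h
  · exact eq_of_adj_of_reach hac hnh hz hz' h
  · exact (eq_of_adj_of_reach hac hnh hz' hz h).symm

lemma vle_hpt_of_inl_slt {v : W} {a : W ⊕ F} (h : G.slt (Sum.inl v) a) :
    G.vle v (G.hpt a) := by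
  cases a with
  | inl u => exact h.1
  | inr e => exact h

lemma vlt_of_slt_inl (hac : G.Acyclic) {w : W} {a : W ⊕ F} (h : G.slt a (Sum.inl w)) :
    G.vlt (G.hpt a) w := by
  cases a with
  | inl v => exact h
  | inr e =>
    have harc : G.Adj (G.tail e) (G.head e) := ⟨e, rfl, rfl⟩
    refine ⟨ReflTransGen.tail h harc, fun hw => hac.not_reach_of_adj harc ?_⟩
    change G.head e = w at hw
    exact hw ▸ h

/-- If no child of `w` lay above all the `b i`, the child towards `b i₀` would be a common
ancestor of `A` strictly below its lca. -/
lemma exists_mem_QSet_of_isLca (hac : G.Acyclic) {ι : Type*} [Nonempty ι] {b : ι → W}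
    {A : Set W} {w : W} (hlca : G.IsLca A w) (hb : ∀ i, G.vlt (b i) w)
    (hA : ∀ a ∈ A, ∃ i, G.Reach (b i) a) : ∃ i j, w ∈ G.QSet (b i) (b j) := by
  obtain ⟨i₀⟩ := ‹Nonempty ι›
  obtain ⟨z₀, hwz₀, hz₀⟩ := (hb i₀).1.exists_adj_of_ne (hb i₀).2
  by_cases hall : ∀ i, G.Reach z₀ (b i)
  · refine absurd (hlca.2 z₀ fun a ha => ?_) (hac.not_reach_of_adj hwz₀)
    obtain ⟨i, hi⟩ := hA a ha
    exact (hall i).trans hi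
  · push Not at hall
    obtain ⟨j, hj⟩ := hall
    obtain ⟨z₁, hwz₁, hz₁⟩ := (hb j).1.exists_adj_of_ne (hb j).2
    exact ⟨i₀, j, z₀, z₁, fun h => hj (h ▸ hz₁), hwz₀, hwz₁, hz₀, hz₁⟩

/-- In a tree, a common ancestor of `A` strictly below `w` sits below a single child of `w`,
which would then have to be both separating children. -/
lemma isLca_of_mem_QSet [Finite F] (hac : G.Acyclic) (hnh : NoHybrid G) {A : Set W}
    {a b w : W} (hw : w ∈ G.QSet a b) (hA : ∀ p ∈ A, G.Reach w p)
    (ha : ∃ p ∈ A, G.Reach a p) (hb : ∃ p ∈ A, G.Reach b p) : G.IsLca A w := by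
  refine ⟨hA, fun l hl => ?_⟩
  obtain ⟨z₁, z₂, hne, hz₁, hz₂, hz₁a, hz₂b⟩ := hw
  obtain ⟨p₁, hp₁, hap₁⟩ := ha
  obtain ⟨p₂, hp₂, hbp₂⟩ := hb
  rcases reach_total_of_reach hnh (hl p₁ hp₁) (hA p₁ hp₁) with h | h
  · exact h
  rcases eq_or_ne l w with rfl | hlw
  · exact ReflTransGen.refl
  obtain ⟨z, hwz, hzl⟩ := h.exists_adj_of_ne hlw
  have e₁ := eq_of_adj_of_reach_of_reach hac hnh hwz hz₁ (hzl.trans (hl p₁ hp₁))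
    (hz₁a.trans hap₁)
  have e₂ := eq_of_adj_of_reach_of_reach hac hnh hwz hz₂ (hzl.trans (hl p₂ hp₂))
    (hz₂b.trans hbp₂)
  exact absurd (e₁.symm.trans e₂) hne

end MGraph

namespace IsGeneTree

variable {T : MGraph V E} {lvT : Set V} {ρT : V} {σ : V → S}

lemma exists_adj_of_not_mem (hT : IsGeneTree T lvT ρT σ) {v : V} (hv : v ∉ lvT) :
    ∃ c, T.Adj v c := by
  have : Finite E := hT.finE
  have hout : 0 < T.outDeg v := by
    rcases eq_or_ne v ρT with rfl | hne
    · exact lt_of_lt_of_le two_pos hT.root_out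
    · exact lt_of_lt_of_le two_pos (hT.inner_deg v hv hne).2
  obtain ⟨⟨e, he⟩⟩ := (Nat.card_pos_iff.mp hout).1
  exact ⟨T.head e, e, he, rfl⟩

lemma exists_leaf_reach (hT : IsGeneTree T lvT ρT σ) (v : V) : ∃ g ∈ lvT, T.Reach v g := by
  have : Finite V := hT.finV
  have : Std.Irrefl (flip (TransGen T.Adj)) := ⟨hT.acyclic⟩
  have : IsTrans V (flip (TransGen T.Adj)) := ⟨fun _ _ _ h₁ h₂ => h₂.trans h₁⟩
  induction v using (Finite.wellFounded_of_trans_of_irrefl (flip (TransGen T.Adj))).induction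
    with
  | _ v ih =>
    by_cases hv : v ∈ lvT
    · exact ⟨v, hv, ReflTransGen.refl⟩
    · obtain ⟨c, hc⟩ := hT.exists_adj_of_not_mem hv
      obtain ⟨g, hg, hcg⟩ := ih c (TransGen.single hc)
      exact ⟨g, hg, hcg.head hc⟩

end IsGeneTree

/-- Axiom (R3) for pairs of gene-tree vertices that are not both duplications. -/
def PreservesStrictAncestry (T : MGraph V E) (lvT : Set V) (t : V → Event)
    (N : MGraph W F) (μ : V → W ⊕ F) : Prop :=
  ∀ x y : V, T.vlt x y →
    ¬ (x ∉ lvT ∧ y ∉ lvT ∧ t x = Event.dupl ∧ t y = Event.dupl) → N.slt (μ x) (μ y)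

section Reconciliation

variable {T : MGraph V E} {lvT : Set V} {ρT : V} {t : V → Event} {σ : V → S}
  {N : MGraph W F} {sp : S → W} {μ : V → W ⊕ F}

lemma hpt_vlt_of_adj_of_spec (hacT : T.Acyclic) (hac : N.Acyclic)
    (hμ : PreservesStrictAncestry T lvT t N μ) {x c : V} {w : W} (hts : t x = Event.spec)
    (hw : μ x = Sum.inl w) (hc : T.Adj x c) : N.vlt (N.hpt (μ c)) w := by
  have hslt := hμ c x ⟨ReflTransGen.single hc, hacT.ne_of_adj hc⟩ (by simp [hts])
  rw [hw] at hslt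
  exact N.vlt_of_slt_inl hac hslt

lemma species_vle_hpt (hR1 : ∀ x ∈ lvT, μ x = Sum.inl (sp (σ x)))
    (hμ : PreservesStrictAncestry T lvT t N μ) {c g : V} (hg : g ∈ lvT) (hcg : T.Reach c g) :
    N.vle (sp (σ g)) (N.hpt (μ c)) := by
  rcases eq_or_ne g c with rfl | hne
  · rw [hR1 g hg]
    exact ReflTransGen.refl
  · have hslt := hμ g c ⟨hcg, hne⟩ (fun h => h.1 hg)
    rw [hR1 g hg] at hslt
    exact N.vle_hpt_of_inl_slt hslt

/-- In a species tree, (R2.i*) and (R2.i) agree at every speciation vertex. -/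
theorem isLca_iff_exists_mem_QSet [Finite F] (hT : IsGeneTree T lvT ρT σ) (hac : N.Acyclic)
    (hnh : NoHybrid N) (hR1 : ∀ x ∈ lvT, μ x = Sum.inl (sp (σ x)))
    (hμ : PreservesStrictAncestry T lvT t N μ) {x : V} {w : W} (hx : x ∉ lvT)
    (hts : t x = Event.spec) (hw : μ x = Sum.inl w) :
    N.IsLca (sp '' (σ '' leavesBelow T lvT x)) w ↔
      ∃ c₁ c₂ : V, T.Adj x c₁ ∧ T.Adj x c₂ ∧
        w ∈ N.QSet (N.hpt (μ c₁)) (N.hpt (μ c₂)) := by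
  have hchild (c : V) (hc : T.Adj x c) : N.vlt (N.hpt (μ c)) w :=
    hpt_vlt_of_adj_of_spec hT.acyclic hac hμ hts hw hc
  have hspecies_below : ∀ a ∈ sp '' (σ '' leavesBelow T lvT x),
      ∃ c, T.Adj x c ∧ N.Reach (N.hpt (μ c)) a := by
    rintro _ ⟨_, ⟨g, ⟨hg, hxg⟩, rfl⟩, rfl⟩
    obtain ⟨c, hc, hcg⟩ := hxg.exists_adj_of_ne (fun h => hx (h ▸ hg))
    exact ⟨c, hc, species_vle_hpt hR1 hμ hg hcg⟩
  have hspecies_of_child (c : V) (hc : T.Adj x c) :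
      ∃ a ∈ sp '' (σ '' leavesBelow T lvT x), N.Reach (N.hpt (μ c)) a := by
    obtain ⟨g, hg, hcg⟩ := hT.exists_leaf_reach c
    exact ⟨_, ⟨_, ⟨g, ⟨hg, hcg.head hc⟩, rfl⟩, rfl⟩, species_vle_hpt hR1 hμ hg hcg⟩
  constructor
  · intro hlca
    obtain ⟨c₀, hc₀⟩ := hT.exists_adj_of_not_mem hx
    have : Nonempty {c // T.Adj x c} := ⟨⟨c₀, hc₀⟩⟩
    obtain ⟨⟨c₁, hc₁⟩, ⟨c₂, hc₂⟩, hQ⟩ :=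
      N.exists_mem_QSet_of_isLca (b := fun c : {c // T.Adj x c} => N.hpt (μ c)) hac hlca
        (fun c => hchild c c.2) (fun a ha => by
          obtain ⟨c, hc, hca⟩ := hspecies_below a ha
          exact ⟨⟨c, hc⟩, hca⟩)
    exact ⟨c₁, c₂, hc₁, hc₂, hQ⟩
  · rintro ⟨c₁, c₂, hc₁, hc₂, hQ⟩
    refine N.isLca_of_mem_QSet hac hnh hQ (fun a ha => ?_) (hspecies_of_child c₁ hc₁)
      (hspecies_of_child c₂ hc₂)
    obtain ⟨c, hc, hca⟩ := hspecies_below a ha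
    exact (hchild c hc).1.trans hca

end Reconciliation

theorem tree_recon_iff_treenet_r2iii_general {V E W F S : Type}
    (T : MGraph V E) (lvT : Set V) (ρT : V) (t : V → Event) (σ : V → S)
    (hT : IsGeneTree T lvT ρT σ)
    (Sg : MGraph W F) (lvS : Set W) (ρS : W) (sp : S → W)
    (hS : IsPhyloTree Sg lvS ρS)
    (μ : V → W ⊕ F) :
    (IsRelaxedRecon T lvT t σ Sg sp μ ∧ SatR2iii T lvT t Sg μ) ↔
      (IsTreeNetRecon T lvT t σ Sg sp μ ∧ SatR2iii T lvT t Sg μ) := by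
  obtain ⟨hSnet, -, hnh⟩ := hS
  have : Finite F := hSnet.finE
  constructor
  · rintro ⟨hR, hiii⟩
    refine ⟨⟨hR.R1, fun x hx hts => ?_, hR.R2ii, hR.R3d, hR.R3s⟩, hiii⟩
    obtain ⟨w, hw, hlca⟩ := hR.R2istar x hx hts
    exact ⟨w, hw,
      (isLca_iff_exists_mem_QSet hT hSnet.acyclic hnh hR.R1 hR.R3s hx hts hw).1 hlca⟩
  · rintro ⟨hR, hiii⟩
    refine ⟨⟨hR.R1, fun x hx hts => ?_, hR.R2ii, hR.R3d, hR.R3s⟩, hiii⟩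
    obtain ⟨w, hw, hQ⟩ := hR.R2i x hx hts
    exact ⟨w, hw,
      (isLca_iff_exists_mem_QSet hT hSnet.acyclic hnh hR.R1 hR.R3s hx hts hw).2 hQ⟩

/-- For an event-labeled gene tree `(T;t,σ)`, a species tree `S` and
    a map `μ : V → W ∪ F`, `μ` is a tree reconciliation map (i.e. a relaxed tree
    reconciliation map which additionally satisfies (R2.iii)) from `(T;t,σ)` to
    `S` iff it is a TreeNet-reconciliation map from `(T;t,σ)` to `S` which
    additionally satisfies (R2.iii). -/
theorem tree_recon_iff_treenet_r2iii {V E W F S : Type}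
    (T : MGraph V E) (lvT : Set V) (ρT : V) (t : V → Event) (σ : V → S)
    (hT : IsGeneTree T lvT ρT σ)
    (Sg : MGraph W F) (lvS : Set W) (ρS : W) (sp : S → W)
    (hS : IsPhyloTree Sg lvS ρS) (hsp : IsLeafLabeling Sg lvS sp)
    (μ : V → W ⊕ F) :
    (IsRelaxedRecon T lvT t σ Sg sp μ ∧ SatR2iii T lvT t Sg μ) ↔
      (IsTreeNetRecon T lvT t σ Sg sp μ ∧ SatR2iii T lvT t Sg μ) :=
  tree_recon_iff_treenet_r2iii_general T lvT ρT t σ hT Sg lvS ρS sp hS μ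

end Phylo
end

section
/- Let (M,χ) be a MUL-tree on 𝕊, let (M',χ) denote its simple subdivision, and let N be the digraph obtained from M' by identifying, for each x∈𝕊, all arcs of M' whose head is a leaf in χ(x) into a single arc (par(x),x). Then N is a network on 𝕊. -/
namespace Phylo

variable {V E W F D U S : Type}

/-- `(M, lv, ρ, χ)` is a pseudo MUL-tree on the species set `S`:
    a rooted tree (possibly with indegree-1 outdegree-1 vertices) whose root has
    indegree 0 and outdegree 1, together with a labeling `χ` of the leaves by `S`
    with pairwise disjoint nonempty classes covering all leaves. -/
structure IsPMULTree (M : MGraph D U) (lv : Set D) (ρ : D) (χ : S → Set D) : Prop where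
  finD : Finite D
  finU : Finite U
  acyclic : M.Acyclic
  root_in : M.inDeg ρ = 0
  root_out : M.outDeg ρ = 1
  leaf_iff : ∀ v : D, v ∈ lv ↔ (M.outDeg v = 0 ∧ M.inDeg v = 1)
  inner_deg : ∀ v : D, v ∉ lv → v ≠ ρ → M.inDeg v = 1 ∧ 1 ≤ M.outDeg v
  chi_sub : ∀ x : S, χ x ⊆ lv
  chi_ne : ∀ x : S, (χ x).Nonempty
  chi_disj : ∀ x y : S, x ≠ y → Disjoint (χ x) (χ y)
  chi_cover : ∀ l ∈ lv, ∃ x : S, l ∈ χ x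
  species_nontriv : ∃ x y : S, x ≠ y

/-- A MUL-tree is a pseudo MUL-tree whose underlying tree is a phylogenetic tree,
    i.e., without indegree-1 outdegree-1 vertices. -/
def IsMULTree (M : MGraph D U) (lv : Set D) (ρ : D) (χ : S → Set D) : Prop :=
  IsPMULTree M lv ρ χ ∧ ∀ v : D, v ∉ lv → v ≠ ρ → 2 ≤ M.outDeg v

/-- `D¹`: the set of vertices with indegree one and outdegree one. -/
def D1set (M : MGraph D U) : Set D := {v | M.inDeg v = 1 ∧ M.outDeg v = 1}

/-- A MUL-reconciliation map `κ : V → (D∖D¹) ∪ U` from the event-labeled gene tree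
    `(T;t,σ)` to the pseudo MUL-tree `(M,χ)`:
    (M1) each leaf maps to a leaf of `M` labeled by its species;
    (M2.i) a speciation vertex maps to an inner vertex of `M` admitting directed
    paths to the images of two distinct children whose first arcs are incomparable;
    (M2.ii) a duplication vertex maps to an arc;
    (M3) ancestor relations are preserved (strictly, unless both are duplications). -/
structure IsMULRecon (T : MGraph V E) (lvT : Set V) (t : V → Event) (σ : V → S)
    (M : MGraph D U) (lvM : Set D) (χ : S → Set D) (κ : V → D ⊕ U) : Prop where
  M0 : ∀ (x : V) (d : D), κ x = Sum.inl d → d ∉ D1set M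
  M1 : ∀ x ∈ lvT, ∃ d : D, κ x = Sum.inl d ∧ d ∈ lvM ∧ d ∈ χ (σ x)
  M2i : ∀ x : V, x ∉ lvT → t x = Event.spec →
      ∃ d : D, κ x = Sum.inl d ∧ d ∉ lvM ∧
        ∃ c₁ c₂ : V, T.Adj x c₁ ∧ T.Adj x c₂ ∧ c₁ ≠ c₂ ∧
          ∃ a₁ a₂ : U, M.tail a₁ = d ∧ M.tail a₂ = d ∧
            M.Reach (M.head a₁) (M.hpt (κ c₁)) ∧
            M.Reach (M.head a₂) (M.hpt (κ c₂)) ∧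
            ¬ M.sle (Sum.inr a₁) (Sum.inr a₂) ∧ ¬ M.sle (Sum.inr a₂) (Sum.inr a₁)
  M2ii : ∀ x : V, x ∉ lvT → t x = Event.dupl → ∃ a : U, κ x = Sum.inr a
  M3d : ∀ x y : V, T.vlt x y → x ∉ lvT → y ∉ lvT →
      t x = Event.dupl → t y = Event.dupl → M.sle (κ x) (κ y)
  M3s : ∀ x y : V, T.vlt x y →
      ¬ (x ∉ lvT ∧ y ∉ lvT ∧ t x = Event.dupl ∧ t y = Event.dupl) →
      M.slt (κ x) (κ y)

/-- `x` is a species with at least two leaves labeled by it. -/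
def MultiSp (χ : S → Set D) (x : S) : Prop :=
  ∃ l₁ l₂ : D, l₁ ∈ χ x ∧ l₂ ∈ χ x ∧ l₁ ≠ l₂

/-- Vertices of the network obtained by folding up (the simple subdivision of) a
    MUL-tree: the inner vertices of the MUL-tree, a leaf for each species, and a
    hybrid vertex for each species labeling at least two leaves. -/
def FoldV (D S : Type) (lv : Set D) (χ : S → Set D) : Type :=
  {d : D // d ∉ lv} ⊕ (S ⊕ {x : S // MultiSp χ x})

/-- Arcs of the folded-up network: the arcs of the MUL-tree (redirected), plus one
    arc `(par x, x)` for every species `x` labeling at least two leaves. -/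
def FoldE (U : Type) {D S : Type} (χ : S → Set D) : Type :=
  U ⊕ {x : S // MultiSp χ x}

open Classical in
/-- The digraph obtained from the simple subdivision of the MUL-tree `(M,χ)` by
    identifying, for each species `x`, all arcs whose head is a leaf in `χ x`
    to a single arc `(par x, x)`. -/
noncomputable def foldGraph (M : MGraph D U) (lv : Set D) (χ : S → Set D)
    (htail : ∀ e : U, M.tail e ∉ lv)
    (hcov : ∀ d ∈ lv, ∃ x : S, d ∈ χ x) :
    MGraph (FoldV D S lv χ) (FoldE U χ) where
  tail a :=
    match a with
    | Sum.inl e => Sum.inl ⟨M.tail e, htail e⟩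
    | Sum.inr x => Sum.inr (Sum.inr x)
  head a :=
    match a with
    | Sum.inl e =>
        if h : M.head e ∈ lv then
          if hm : MultiSp χ (Classical.choose (hcov _ h)) then
            Sum.inr (Sum.inr ⟨Classical.choose (hcov _ h), hm⟩)
          else Sum.inr (Sum.inl (Classical.choose (hcov _ h)))
        else Sum.inl ⟨M.head e, h⟩
    | Sum.inr x => Sum.inr (Sum.inl x.1)

/-- Leaves of the folded-up network: one for each species. -/
def foldLeaves (lv : Set D) (χ : S → Set D) : Set (FoldV D S lv χ) :=
  Set.range fun x : S => Sum.inr (Sum.inl x)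

/-- Species labeling of the folded-up network. -/
def foldSp (lv : Set D) (χ : S → Set D) : S → FoldV D S lv χ :=
  fun x => Sum.inr (Sum.inl x)

/-- Root of the folded-up network. -/
def foldRoot (lv : Set D) (χ : S → Set D) (ρ : D) (hρ : ρ ∉ lv) : FoldV D S lv χ :=
  Sum.inl ⟨ρ, hρ⟩

/-!
Folding keeps the in- and out-arcs of every inner vertex of `M`, so those remain tree vertices;
the only child of the root is not a leaf because `M` has leaves with two different labels.
A species `x` with a single leaf `l` becomes a leaf entered only by the old arc into `l`, while a
species with several leaves gets a hybrid vertex that receives one arc per leaf and sends a single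
arc to the new leaf `x`. The new vertices lead only to sinks, so a directed cycle stays among the
inner vertices and would already be a cycle of `M`.
-/

namespace MGraph

variable {G : MGraph V E}

lemma exists_adj_of_inDeg_pos {v : V} (h : 0 < G.inDeg v) : ∃ u, G.Adj u v :=
  let ⟨⟨e, he⟩⟩ := (Nat.card_pos_iff.1 h).1
  ⟨G.tail e, e, rfl, he⟩

lemma not_adj_of_outDeg_eq_zero [Finite E] {v : V} (h : G.outDeg v = 0) (w : V) :
    ¬ G.Adj v w := by
  rintro ⟨e, he, -⟩
  have : IsEmpty {e : E // G.tail e = v} := Finite.card_eq_zero_iff.1 h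
  exact this.elim ⟨e, he⟩

lemma eq_of_adj_of_outDeg_eq_one {v w w' : V} (h : G.outDeg v = 1)
    (hw : G.Adj v w) (hw' : G.Adj v w') : w = w' := by
  obtain ⟨e, he, rfl⟩ := hw
  obtain ⟨e', he', rfl⟩ := hw'
  have : Subsingleton {e : E // G.tail e = v} := (Nat.card_eq_one_iff_unique.1 h).1
  have : (⟨e, he⟩ : {e : E // G.tail e = v}) = ⟨e', he'⟩ := Subsingleton.elim _ _
  exact congrArg (G.head ·.1) this

lemma reach_of_forall_exists_adj [Finite V] (hG : G.Acyclic) {ρ : V}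
    (hpar : ∀ v, v ≠ ρ → ∃ u, G.Adj u v) (v : V) : G.Reach ρ v := by
  have : Std.Irrefl (Relation.TransGen G.Adj) := ⟨hG⟩
  refine (Finite.wellFounded_of_trans_of_irrefl (Relation.TransGen G.Adj)).induction v
    fun v ih => ?_
  by_cases hv : v = ρ
  · exact hv ▸ Relation.ReflTransGen.refl
  · obtain ⟨u, hu⟩ := hpar v hv
    exact (ih u (.single hu)).tail hu

end MGraph

lemma eq_of_mem_of_disjoint {ι α : Type} {χ : ι → Set α}
    (hdisj : ∀ x y : ι, x ≠ y → Disjoint (χ x) (χ y)) {d : α} {x y : ι} (hx : d ∈ χ x)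
    (hy : d ∈ χ y) : x = y := by
  by_contra hne
  exact Set.disjoint_left.1 (hdisj x y hne) hx hy

namespace IsPMULTree

variable {M : MGraph D U} {lv : Set D} {ρ : D} {χ : S → Set D}

lemma finite_species (hP : IsPMULTree M lv ρ χ) : Finite S := by
  have := hP.finD
  refine Finite.of_injective (fun x => (hP.chi_ne x).some) fun x y hxy => ?_
  exact eq_of_mem_of_disjoint hP.chi_disj (hP.chi_ne x).some_mem
    ((congrArg (· ∈ χ y) hxy).mpr (hP.chi_ne y).some_mem)

lemma root_not_mem (hP : IsPMULTree M lv ρ χ) : ρ ∉ lv := fun h =>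
  zero_ne_one (hP.root_in.symm.trans ((hP.leaf_iff ρ).1 h).2)

lemma inDeg_eq_one_of_mem (hP : IsPMULTree M lv ρ χ) : ∀ l ∈ lv, M.inDeg l = 1 :=
  fun l hl => ((hP.leaf_iff l).1 hl).2

lemma inDeg_eq_one (hP : IsPMULTree M lv ρ χ) {v : D} (hv : v ≠ ρ) : M.inDeg v = 1 := by
  by_cases hvl : v ∈ lv
  · exact hP.inDeg_eq_one_of_mem v hvl
  · exact (hP.inner_deg v hvl hv).1

lemma head_ne_root (hP : IsPMULTree M lv ρ χ) (e : U) : M.head e ≠ ρ := fun he => by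
  have := hP.finU
  exact (Finite.card_eq_zero_iff.1 hP.root_in).elim ⟨e, he⟩

lemma reach_root (hP : IsPMULTree M lv ρ χ) (v : D) : M.Reach ρ v :=
  have := hP.finD
  MGraph.reach_of_forall_exists_adj hP.acyclic
    (fun _ hv => MGraph.exists_adj_of_inDeg_pos ((hP.inDeg_eq_one hv).symm ▸ one_pos)) v

/-- Otherwise every vertex would be the root or its only child, leaving room for one leaf only. -/
lemma head_not_mem_of_tail_eq_root (hP : IsPMULTree M lv ρ χ) {e : U} (he : M.tail e = ρ) :
    M.head e ∉ lv := by
  have := hP.finU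
  intro hleaf
  obtain ⟨x, y, hxy⟩ := hP.species_nontriv
  obtain ⟨l₁, hl₁⟩ := hP.chi_ne x
  obtain ⟨l₂, hl₂⟩ := hP.chi_ne y
  have hl : l₁ ≠ l₂ := fun h => hxy (eq_of_mem_of_disjoint hP.chi_disj hl₁ (h ▸ hl₂))
  have below_child : ∀ l ∈ lv, l = M.head e := fun l hl => by
    rcases (hP.reach_root l).cases_head with h | ⟨c, hc, hcl⟩
    · exact absurd (h ▸ hl) hP.root_not_mem
    obtain rfl : M.head e = c := MGraph.eq_of_adj_of_outDeg_eq_one hP.root_out ⟨e, he, rfl⟩ hc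
    rcases hcl.cases_head with h | ⟨w, hw, -⟩
    · exact h.symm
    · exact absurd hw (MGraph.not_adj_of_outDeg_eq_zero ((hP.leaf_iff _).1 hleaf).1 w)
  exact hl ((below_child l₁ (hP.chi_sub x hl₁)).trans (below_child l₂ (hP.chi_sub y hl₂)).symm)

end IsPMULTree

instance [Finite D] [Finite S] {lv : Set D} {χ : S → Set D} :
    Finite (FoldV D S lv χ) :=
  inferInstanceAs (Finite (_ ⊕ _ ⊕ _))

instance [Finite U] [Finite S] {χ : S → Set D} : Finite (FoldE U χ) :=
  inferInstanceAs (Finite (_ ⊕ _))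

lemma isLeafLabeling_foldSp {lv : Set D} {χ : S → Set D}
    (G : MGraph (FoldV D S lv χ) E) : IsLeafLabeling G (foldLeaves lv χ) (foldSp lv χ) where
  inj _ _ h := Sum.inl.inj (Sum.inr.inj h)
  mem x := ⟨x, rfl⟩
  surj := by
    rintro _ ⟨x, rfl⟩
    exact ⟨x, rfl⟩

section Fold

variable {M : MGraph D U} {lv : Set D} {χ : S → Set D}
  {htail : ∀ e : U, M.tail e ∉ lv} {hcov : ∀ d ∈ lv, ∃ x : S, d ∈ χ x}

open Classical in
/-- `(foldGraph M lv χ htail hcov).head (Sum.inl e)` unfolds to `foldVert lv χ hcov (M.head e)`. -/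
noncomputable def foldVert (lv : Set D) (χ : S → Set D) (hcov : ∀ d ∈ lv, ∃ x : S, d ∈ χ x)
    (d : D) : FoldV D S lv χ :=
  if h : d ∈ lv then
    if hm : MultiSp χ (Classical.choose (hcov _ h)) then
      Sum.inr (Sum.inr ⟨Classical.choose (hcov _ h), hm⟩)
    else Sum.inr (Sum.inl (Classical.choose (hcov _ h)))
  else Sum.inl ⟨d, h⟩

lemma foldVert_of_not_mem {d : D} (h : d ∉ lv) : foldVert lv χ hcov d = Sum.inl ⟨d, h⟩ :=
  dif_neg h

lemma foldVert_of_multiSp (hdisj : ∀ x y : S, x ≠ y → Disjoint (χ x) (χ y)) {d : D} {x : S}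
    (hd : d ∈ lv) (hx : d ∈ χ x) (hm : MultiSp χ x) :
    foldVert lv χ hcov d = Sum.inr (Sum.inr ⟨x, hm⟩) := by
  have hc := eq_of_mem_of_disjoint hdisj (Classical.choose_spec (hcov d hd)) hx
  exact (dif_pos hd).trans <| (dif_pos (hc ▸ hm)).trans <|
    congrArg (fun y => Sum.inr (Sum.inr y)) (Subtype.ext hc)

lemma foldVert_of_not_multiSp (hdisj : ∀ x y : S, x ≠ y → Disjoint (χ x) (χ y)) {d : D}
    {x : S} (hd : d ∈ lv) (hx : d ∈ χ x) (hm : ¬ MultiSp χ x) :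
    foldVert lv χ hcov d = Sum.inr (Sum.inl x) := by
  have hc := eq_of_mem_of_disjoint hdisj (Classical.choose_spec (hcov d hd)) hx
  exact (dif_pos hd).trans <| (dif_neg fun h => hm (hc ▸ h)).trans <| by rw [hc]

lemma foldVert_cases (hdisj : ∀ x y : S, x ≠ y → Disjoint (χ x) (χ y)) (d : D) :
    (∃ hd : d ∉ lv, foldVert lv χ hcov d = Sum.inl ⟨d, hd⟩) ∨
    (d ∈ lv ∧ ∃ x, d ∈ χ x ∧ ∃ hm : MultiSp χ x,
      foldVert lv χ hcov d = Sum.inr (Sum.inr ⟨x, hm⟩)) ∨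
    (d ∈ lv ∧ ∃ x, d ∈ χ x ∧ ¬ MultiSp χ x ∧ foldVert lv χ hcov d = Sum.inr (Sum.inl x)) := by
  by_cases hd : d ∈ lv
  · obtain ⟨x, hx⟩ := hcov d hd
    by_cases hm : MultiSp χ x
    · exact .inr (.inl ⟨hd, x, hx, hm, foldVert_of_multiSp hdisj hd hx hm⟩)
    · exact .inr (.inr ⟨hd, x, hx, hm, foldVert_of_not_multiSp hdisj hd hx hm⟩)
  · exact .inl ⟨hd, foldVert_of_not_mem hd⟩

lemma foldVert_eq_inl_iff (hdisj : ∀ x y : S, x ≠ y → Disjoint (χ x) (χ y)) {d : D}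
    {a : {d : D // d ∉ lv}} : foldVert lv χ hcov d = Sum.inl a ↔ d = a.1 := by
  rcases foldVert_cases (hcov := hcov) hdisj d with
    ⟨hd, h⟩ | ⟨hd, _, _, _, h⟩ | ⟨hd, _, _, _, h⟩ <;> rw [h]
  · exact ⟨fun h => congrArg Subtype.val (Sum.inl.inj h), fun h => congrArg Sum.inl (Subtype.ext h)⟩
  all_goals exact ⟨nofun, fun h => absurd (h ▸ hd) a.2⟩

lemma foldVert_eq_hyb_iff (hdisj : ∀ x y : S, x ≠ y → Disjoint (χ x) (χ y))
    (hsub : ∀ x : S, χ x ⊆ lv) {d : D} {x : {x : S // MultiSp χ x}} :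
    foldVert lv χ hcov d = Sum.inr (Sum.inr x) ↔ d ∈ χ x.1 := by
  rcases foldVert_cases (hcov := hcov) hdisj d with
    ⟨hd, h⟩ | ⟨-, y, hy, _, h⟩ | ⟨-, y, hy, hm, h⟩ <;> rw [h]
  · exact ⟨nofun, fun h => absurd (hsub _ h) hd⟩
  · refine ⟨fun h => ?_, fun h => ?_⟩
    · exact congrArg Subtype.val (Sum.inr.inj (Sum.inr.inj h)) ▸ hy
    · exact congrArg (fun y => Sum.inr (Sum.inr y))
        (Subtype.ext (eq_of_mem_of_disjoint hdisj hy h))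
  · exact ⟨nofun, fun h => absurd (eq_of_mem_of_disjoint hdisj hy h ▸ x.2) hm⟩

lemma foldVert_eq_sp_iff (hdisj : ∀ x y : S, x ≠ y → Disjoint (χ x) (χ y))
    (hsub : ∀ x : S, χ x ⊆ lv) {d : D} {x : S} :
    foldVert lv χ hcov d = Sum.inr (Sum.inl x) ↔ d ∈ χ x ∧ ¬ MultiSp χ x := by
  rcases foldVert_cases (hcov := hcov) hdisj d with
    ⟨hd, h⟩ | ⟨-, y, hy, hm, h⟩ | ⟨-, y, hy, hm, h⟩ <;> rw [h]
  · exact ⟨nofun, fun h => absurd (hsub _ h.1) hd⟩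
  · exact ⟨nofun, fun h => absurd (eq_of_mem_of_disjoint hdisj hy h.1 ▸ hm) h.2⟩
  · refine ⟨fun h => ?_, fun h => ?_⟩
    · obtain rfl : y = x := Sum.inl.inj (Sum.inr.inj h)
      exact ⟨hy, hm⟩
    · rw [eq_of_mem_of_disjoint hdisj hy h.1]

section Degrees

variable [Finite U] [Finite S]

lemma foldGraph_inDeg (v : FoldV D S lv χ) :
    (foldGraph M lv χ htail hcov).inDeg v =
      Nat.card {e : U // foldVert lv χ hcov (M.head e) = v} +
        Nat.card {x : {x : S // MultiSp χ x} // Sum.inr (Sum.inl x.1) = v} :=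
  (Nat.card_congr Equiv.subtypeSum).trans Nat.card_sum

lemma foldGraph_outDeg (v : FoldV D S lv χ) :
    (foldGraph M lv χ htail hcov).outDeg v =
      Nat.card {e : U // Sum.inl ⟨M.tail e, htail e⟩ = v} +
        Nat.card {x : {x : S // MultiSp χ x} // Sum.inr (Sum.inr x) = v} :=
  (Nat.card_congr Equiv.subtypeSum).trans Nat.card_sum

lemma foldGraph_inDeg_inl (hdisj : ∀ x y : S, x ≠ y → Disjoint (χ x) (χ y))
    (a : {d : D // d ∉ lv}) : (foldGraph M lv χ htail hcov).inDeg (Sum.inl a) = M.inDeg a.1 := by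
  refine (foldGraph_inDeg _).trans ?_
  rw [Nat.card_congr (Equiv.subtypeEquivRight fun e => foldVert_eq_inl_iff hdisj)]
  simp [MGraph.inDeg]

lemma foldGraph_outDeg_inl (a : {d : D // d ∉ lv}) :
    (foldGraph M lv χ htail hcov).outDeg (Sum.inl a) = M.outDeg a.1 := by
  refine (foldGraph_outDeg _).trans ?_
  simp [MGraph.outDeg, Subtype.ext_iff]

lemma foldGraph_outDeg_sp (x : S) :
    (foldGraph M lv χ htail hcov).outDeg (Sum.inr (Sum.inl x)) = 0 := by
  refine (foldGraph_outDeg _).trans ?_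
  simp

lemma foldGraph_outDeg_hyb (x : {x : S // MultiSp χ x}) :
    (foldGraph M lv χ htail hcov).outDeg (Sum.inr (Sum.inr x)) = 1 := by
  refine (foldGraph_outDeg _).trans ?_
  simp

lemma foldGraph_inDeg_sp (hdisj : ∀ x y : S, x ≠ y → Disjoint (χ x) (χ y))
    (hsub : ∀ x : S, χ x ⊆ lv) (hleaf : ∀ l ∈ lv, M.inDeg l = 1) {x : S} (hx : (χ x).Nonempty) :
    (foldGraph M lv χ htail hcov).inDeg (Sum.inr (Sum.inl x)) = 1 := by
  refine (foldGraph_inDeg _).trans ?_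
  rw [Nat.card_congr (Equiv.subtypeEquivRight fun e => foldVert_eq_sp_iff hdisj hsub)]
  simp only [Sum.inr.injEq, Sum.inl.injEq]
  by_cases hm : MultiSp χ x
  · simp only [hm, not_true_eq_false, and_false, Nat.card_of_isEmpty, zero_add]
    exact Nat.card_eq_one_iff_unique.2
      ⟨⟨fun a b => Subtype.ext (Subtype.ext (a.2.trans b.2.symm))⟩, ⟨⟨⟨x, hm⟩, rfl⟩⟩⟩
  · obtain ⟨l, hl⟩ := hx
    have hχ : χ x = {l} := Set.eq_singleton_iff_unique_mem.2
      ⟨hl, fun l' hl' => by_contra fun hne => hm ⟨l', l, hl', hl, hne⟩⟩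
    have : IsEmpty {y : {x : S // MultiSp χ x} // y.1 = x} := ⟨fun y => hm (y.2 ▸ y.1.2)⟩
    simp only [hχ, Set.mem_singleton_iff, hm, not_false_eq_true, and_true, Nat.card_of_isEmpty,
      add_zero]
    exact hleaf l (hsub x hl)

lemma two_le_foldGraph_inDeg_hyb (hdisj : ∀ x y : S, x ≠ y → Disjoint (χ x) (χ y))
    (hsub : ∀ x : S, χ x ⊆ lv) (hleaf : ∀ l ∈ lv, M.inDeg l = 1) (x : {x : S // MultiSp χ x}) :
    2 ≤ (foldGraph M lv χ htail hcov).inDeg (Sum.inr (Sum.inr x)) := by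
  refine le_of_le_of_eq ?_ (foldGraph_inDeg _).symm
  rw [Nat.card_congr (Equiv.subtypeEquivRight fun e => foldVert_eq_hyb_iff hdisj hsub)]
  obtain ⟨l₁, l₂, hl₁, hl₂, hne⟩ := x.2
  obtain ⟨-, e₁, -, rfl⟩ := MGraph.exists_adj_of_inDeg_pos (hleaf _ (hsub _ hl₁)).ge
  obtain ⟨-, e₂, -, rfl⟩ := MGraph.exists_adj_of_inDeg_pos (hleaf _ (hsub _ hl₂)).ge
  have : Nontrivial {e : U // M.head e ∈ χ x.1} :=
    ⟨⟨e₁, hl₁⟩, ⟨e₂, hl₂⟩, fun h => hne (congrArg (M.head ·.1) h)⟩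
  have := Finite.one_lt_card_iff_nontrivial.2 this
  omega

end Degrees

lemma foldGraph_adj_inl_iff (hdisj : ∀ x y : S, x ≠ y → Disjoint (χ x) (χ y))
    {w : FoldV D S lv χ} {b : {d : D // d ∉ lv}} :
    (foldGraph M lv χ htail hcov).Adj w (Sum.inl b) ↔ ∃ a, w = Sum.inl a ∧ M.Adj a.1 b.1 := by
  constructor
  · rintro ⟨e | y, rfl, hh⟩
    · exact ⟨_, rfl, e, rfl, (foldVert_eq_inl_iff (hcov := hcov) hdisj).1 hh⟩
    · exact nomatch hh
  · rintro ⟨a, rfl, e, he, hh⟩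
    exact ⟨Sum.inl e, congrArg Sum.inl (Subtype.ext he),
      (foldVert_eq_inl_iff (hcov := hcov) hdisj).2 hh⟩

lemma foldGraph_transGen_inl (hdisj : ∀ x y : S, x ≠ y → Disjoint (χ x) (χ y))
    {w : FoldV D S lv χ} {b : {d : D // d ∉ lv}}
    (h : Relation.TransGen (foldGraph M lv χ htail hcov).Adj w (Sum.inl b)) :
    ∃ a, w = Sum.inl a ∧ Relation.TransGen M.Adj a.1 b.1 := by
  induction h using Relation.TransGen.head_induction_on with
  | single h =>
    obtain ⟨a, rfl, ha⟩ := (foldGraph_adj_inl_iff hdisj).1 h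
    exact ⟨a, rfl, .single ha⟩
  | head h _ ih =>
    obtain ⟨c, rfl, hc⟩ := ih
    obtain ⟨a, rfl, ha⟩ := (foldGraph_adj_inl_iff hdisj).1 h
    exact ⟨a, rfl, .head ha hc⟩

lemma foldGraph_not_adj_sp (x : S) (w : FoldV D S lv χ) :
    ¬ (foldGraph M lv χ htail hcov).Adj (Sum.inr (Sum.inl x)) w := by
  rintro ⟨e | y, h, -⟩ <;> exact nomatch h

lemma foldGraph_acyclic (hdisj : ∀ x y : S, x ≠ y → Disjoint (χ x) (χ y)) (hM : M.Acyclic) :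
    (foldGraph M lv χ htail hcov).Acyclic := by
  rintro (a | z) hv
  · obtain ⟨a', ha', h⟩ := foldGraph_transGen_inl hdisj hv
    cases ha'
    exact hM _ h
  · obtain ⟨c, ⟨e | y, ht, rfl⟩, hc⟩ := Relation.TransGen.head'_iff.1 hv
    · exact nomatch ht
    rcases hc.cases_head with h | ⟨w, hw, -⟩
    · exact nomatch ht.trans h.symm
    · exact foldGraph_not_adj_sp _ _ hw

variable {ρ : D}

lemma foldGraph_inl_isTreeVertex (hM : IsMULTree M lv ρ χ) {a : {d : D // d ∉ lv}}
    (ha : a.1 ≠ ρ) :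
    (foldGraph M lv χ htail hcov).inDeg (Sum.inl a) = 1 ∧
      2 ≤ (foldGraph M lv χ htail hcov).outDeg (Sum.inl a) := by
  have := hM.1.finU
  have := hM.1.finite_species
  rw [foldGraph_inDeg_inl hM.1.chi_disj, foldGraph_outDeg_inl]
  exact ⟨hM.1.inDeg_eq_one ha, hM.2 a.1 a.2 ha⟩

lemma foldGraph_adj_foldRoot (hP : IsPMULTree M lv ρ χ) (hρ : ρ ∉ lv) {c : FoldV D S lv χ}
    (hc : (foldGraph M lv χ htail hcov).Adj (foldRoot lv χ ρ hρ) c) :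
    ∃ a : {d : D // d ∉ lv}, a.1 ≠ ρ ∧ c = Sum.inl a := by
  obtain ⟨e | y, ht, rfl⟩ := hc
  · have he : M.tail e = ρ := congrArg Subtype.val (Sum.inl.inj ht)
    have hnl := hP.head_not_mem_of_tail_eq_root he
    exact ⟨⟨M.head e, hnl⟩, hP.head_ne_root e, foldVert_of_not_mem (hcov := hcov) hnl⟩
  · exact nomatch ht

lemma foldGraph_mem_foldLeaves_iff (hP : IsPMULTree M lv ρ χ) (v : FoldV D S lv χ) :
    v ∈ foldLeaves lv χ ↔
      (foldGraph M lv χ htail hcov).outDeg v = 0 ∧ (foldGraph M lv χ htail hcov).inDeg v = 1 := by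
  have := hP.finU
  have := hP.finite_species
  refine ⟨?_, fun ⟨hout, hin⟩ => ?_⟩
  · rintro ⟨x, rfl⟩
    exact ⟨foldGraph_outDeg_sp x, foldGraph_inDeg_sp hP.chi_disj hP.chi_sub hP.inDeg_eq_one_of_mem
      (hP.chi_ne x)⟩
  rcases v with a | x | x
  · rw [foldGraph_outDeg_inl] at hout
    rw [foldGraph_inDeg_inl hP.chi_disj] at hin
    exact absurd ((hP.leaf_iff a.1).2 ⟨hout, hin⟩) a.2
  · exact ⟨x, rfl⟩
  · exact absurd ((foldGraph_outDeg_hyb (htail := htail) (hcov := hcov) x).symm.trans hout)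
      one_ne_zero

lemma foldGraph_inner_deg (hM : IsMULTree M lv ρ χ) (hρ : ρ ∉ lv) (v : FoldV D S lv χ)
    (hvl : v ∉ foldLeaves lv χ) (hvρ : v ≠ foldRoot lv χ ρ hρ) :
    ((foldGraph M lv χ htail hcov).inDeg v = 1 ∧ 2 ≤ (foldGraph M lv χ htail hcov).outDeg v) ∨
      (2 ≤ (foldGraph M lv χ htail hcov).inDeg v ∧
        (foldGraph M lv χ htail hcov).outDeg v = 1) := by
  have hP := hM.1
  have := hP.finU
  have := hP.finite_species
  rcases v with a | x | x
  · exact .inl (foldGraph_inl_isTreeVertex hM fun h => hvρ (congrArg Sum.inl (Subtype.ext h)))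
  · exact absurd ⟨x, rfl⟩ hvl
  · exact .inr ⟨two_le_foldGraph_inDeg_hyb hP.chi_disj hP.chi_sub hP.inDeg_eq_one_of_mem x,
      foldGraph_outDeg_hyb x⟩

end Fold

/-- Let `(M,χ)` be a MUL-tree on `𝕊`, let `(M',χ)` be its simple
    subdivision, and let `N` be the digraph obtained from `M'` by identifying, for
    each `x ∈ 𝕊`, all arcs of `M'` whose head is a leaf in `χ x` into a single arc
    `(par x, x)` (this composite is `foldGraph`). Then `N` is a network on `𝕊`. -/
theorem fold_is_network {D U S : Type}
    (M : MGraph D U) (lv : Set D) (ρ : D) (χ : S → Set D)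
    (hM : IsMULTree M lv ρ χ)
    (htail : ∀ e : U, M.tail e ∉ lv) (hρ : ρ ∉ lv) :
    IsNetwork (foldGraph M lv χ htail hM.1.chi_cover)
        (foldLeaves lv χ) (foldRoot lv χ ρ hρ) ∧
      IsLeafLabeling (foldGraph M lv χ htail hM.1.chi_cover)
        (foldLeaves lv χ) (foldSp lv χ) := by
  have hP := hM.1
  have := hP.finD
  have := hP.finU
  have := hP.finite_species
  refine ⟨⟨inferInstance, inferInstance, foldGraph_acyclic hP.chi_disj hP.acyclic, ?_, ?_, ?_,
    foldGraph_mem_foldLeaves_iff hP, foldGraph_inner_deg hM hρ, ?_⟩, isLeafLabeling_foldSp _⟩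
  · exact (foldGraph_inDeg_inl hP.chi_disj _).trans hP.root_in
  · exact (foldGraph_outDeg_inl _).trans hP.root_out
  · intro c hc
    obtain ⟨a, ha, rfl⟩ := foldGraph_adj_foldRoot hP hρ hc
    exact foldGraph_inl_isTreeVertex hM ha
  · obtain ⟨x, y, hxy⟩ := hP.species_nontriv
    exact ⟨_, _, ⟨x, rfl⟩, ⟨y, rfl⟩, fun h => hxy (Sum.inl.inj (Sum.inr.inj h))⟩

end Phylo
end

section
/- Let f=(f_V,f_E) be a folding map from a pseudo MUL-tree (M=(D,U),χ) on 𝕊 to a network N=(W,F) on 𝕊. Then for any a,b ∈ D∪U with a ⪯_M b, we have g(a) ⪯_N g(b), where g(x)=f_V(x) if x∈D and g(x)=f_E(x) if x∈U. In particular, if a and b are distinct and not both arcs, then g(a) ≺_N g(b). -/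
namespace Phylo

variable {V E W F D U S : Type}

/-- A folding map `f = (fV, fE)` from a pseudo MUL-tree `(M,χ)` (with leaf set `lvM`)
    to the network `N` (with species labeling `sp`):
    (F1) `fV` and `fE` are compatible with tails and heads;
    (F2) each leaf of `M` is mapped to the species labeling it;
    (F3) each arc of `N` lifts uniquely at each preimage of its tail. -/
structure IsFoldingMap (M : MGraph D U) (lvM : Set D) (χ : S → Set D)
    (N : MGraph W F) (sp : S → W) (fV : D → W) (fE : U → F) : Prop where
  fV_surj : Function.Surjective fV
  fE_surj : Function.Surjective fE
  F1t : ∀ a : U, N.tail (fE a) = fV (M.tail a)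
  F1h : ∀ a : U, N.head (fE a) = fV (M.head a)
  F2 : ∀ v ∈ lvM, ∀ x : S, v ∈ χ x → fV v = sp x
  F3 : ∀ (a : F) (v : D), fV v = N.tail a → ∃! b : U, fE b = a ∧ M.tail b = v

/-! By (F1) a folding map is a homomorphism of directed multigraphs; it
sends directed paths to directed walks and hence preserves `⪯` on vertices and arcs. Strictness
survives because a nontrivial path cannot collapse to a point in the acyclic network `N`. -/

namespace MGraph

structure IsHom (M : MGraph D U) (N : MGraph W F) (fV : D → W) (fE : U → F) : Prop where
  map_tail : ∀ a : U, N.tail (fE a) = fV (M.tail a)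
  map_head : ∀ a : U, N.head (fE a) = fV (M.head a)

section Hom

variable {M : MGraph D U} {N : MGraph W F} {fV : D → W} {fE : U → F}

theorem IsHom.adj (hf : IsHom M N fV fE) {u v : D} : M.Adj u v → N.Adj (fV u) (fV v) := by
  rintro ⟨a, rfl, rfl⟩
  exact ⟨fE a, hf.map_tail a, hf.map_head a⟩

theorem IsHom.reach (hf : IsHom M N fV fE) {u v : D} (h : M.Reach u v) :
    N.Reach (fV u) (fV v) :=
  h.lift fV fun _ _ => hf.adj

theorem IsHom.vlt (hf : IsHom M N fV fE) (hN : N.Acyclic) {u v : D} (h : M.vlt u v) :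
    N.vlt (fV u) (fV v) := by
  obtain ⟨hreach, hne⟩ := h
  refine ⟨hf.reach hreach, fun heq => ?_⟩
  rcases Relation.reflTransGen_iff_eq_or_transGen.mp hreach with h | h
  · exact hne h
  · have hcycle : Relation.TransGen N.Adj (fV v) (fV u) := h.lift fV fun _ _ => hf.adj
    exact hN _ (heq ▸ hcycle)

theorem head_ne_tail_of_acyclic {N : MGraph W F} (hN : N.Acyclic) (e : F) :
    N.head e ≠ N.tail e :=
  fun heq => hN _ (Relation.TransGen.single ⟨e, rfl, heq⟩)

theorem IsHom.vlt_head_tail (hf : IsHom M N fV fE) (hN : N.Acyclic) {a : U}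
    (h : M.Reach (M.tail a) (M.head a)) : N.vlt (N.head (fE a)) (N.tail (fE a)) := by
  refine ⟨?_, head_ne_tail_of_acyclic hN _⟩
  rw [hf.map_tail, hf.map_head]
  exact hf.reach h

theorem IsHom.slt (hf : IsHom M N fV fE) (hN : N.Acyclic) :
    ∀ {a b : D ⊕ U}, M.slt a b → N.slt (Sum.map fV fE a) (Sum.map fV fE b)
  | Sum.inl _, Sum.inl _, h => hf.vlt hN h
  | Sum.inl _, Sum.inr f, h => by
    change N.Reach (N.head (fE f)) _
    exact hf.map_head f ▸ hf.reach h
  | Sum.inr e, Sum.inl _, h => by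
    change N.Reach _ (N.tail (fE e))
    exact hf.map_tail e ▸ hf.reach h
  | Sum.inr e, Sum.inr f, ⟨he, hef, hf'⟩ => by
    refine ⟨hf.vlt_head_tail hN he.1, ?_, hf.vlt_head_tail hN hf'.1⟩
    change N.Reach (N.head (fE f)) (N.tail (fE e))
    rw [hf.map_tail, hf.map_head]
    exact hf.reach hef

theorem IsHom.sle (hf : IsHom M N fV fE) (hN : N.Acyclic) {a b : D ⊕ U} (h : M.sle a b) :
    N.sle (Sum.map fV fE a) (Sum.map fV fE b) := by
  rcases h with rfl | h
  · exact Or.inl rfl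
  · exact Or.inr (hf.slt hN h)

end Hom

end MGraph

theorem IsFoldingMap.isHom {M : MGraph D U} {lvM : Set D} {χ : S → Set D} {N : MGraph W F}
    {sp : S → W} {fV : D → W} {fE : U → F} (hf : IsFoldingMap M lvM χ N sp fV fE) :
    M.IsHom N fV fE :=
  ⟨hf.F1t, hf.F1h⟩

theorem folding_map_ancestor_preserving_general {D U W F S : Type}
    (M : MGraph D U) (lvM : Set D) (χ : S → Set D)
    (N : MGraph W F) (lvN : Set W) (ρN : W) (sp : S → W)
    (hN : IsNetwork N lvN ρN)
    (fV : D → W) (fE : U → F) (hf : IsFoldingMap M lvM χ N sp fV fE) :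
    ∀ a b : D ⊕ U, M.sle a b →
      N.sle (Sum.map fV fE a) (Sum.map fV fE b) ∧
        (a ≠ b → ¬ (∃ (ea eb : U), a = Sum.inr ea ∧ b = Sum.inr eb) →
          N.slt (Sum.map fV fE a) (Sum.map fV fE b)) := by
  intro a b hab
  refine ⟨hf.isHom.sle hN.acyclic hab, fun hne _ => ?_⟩
  exact hf.isHom.slt hN.acyclic (hab.resolve_left hne)

/-- A folding map `f = (fV,fE)` from a pseudo MUL-tree `(M,χ)` on `𝕊`
    to a network `N` on `𝕊` is ancestor-preserving: for `a, b ∈ D ∪ U` with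
    `a ⪯_M b` we have `g(a) ⪯_N g(b)` (where `g = fV` on vertices and `g = fE` on
    arcs); in particular, if `a ≠ b` and not both are arcs, then `g(a) ≺_N g(b)`. -/
theorem folding_map_ancestor_preserving {D U W F S : Type}
    (M : MGraph D U) (lvM : Set D) (ρM : D) (χ : S → Set D)
    (hM : IsPMULTree M lvM ρM χ)
    (N : MGraph W F) (lvN : Set W) (ρN : W) (sp : S → W)
    (hN : IsNetwork N lvN ρN) (hsp : IsLeafLabeling N lvN sp)
    (fV : D → W) (fE : U → F) (hf : IsFoldingMap M lvM χ N sp fV fE) :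
    ∀ a b : D ⊕ U, M.sle a b →
      N.sle (Sum.map fV fE a) (Sum.map fV fE b) ∧
        (a ≠ b → ¬ (∃ (ea eb : U), a = Sum.inr ea ∧ b = Sum.inr eb) →
          N.slt (Sum.map fV fE a) (Sum.map fV fE b)) :=
  folding_map_ancestor_preserving_general M lvM χ N lvN ρN sp hN fV fE hf

end Phylo
end
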